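/- Let k be an algebraically closed field, n ≥ 1 an integer, and A, B ∈ GL_n(k). Then the following are equivalent: (i) the subgroup generated by A and B acts irreducibly on kⁿ, i.e., the only k-subspaces W ⊆ kⁿ with A·W ⊆ W and B·W ⊆ W are 0 and kⁿ; (ii) the k-linear span of the set of all products of at most n² matrices, each equal to A or to B (the empty product being the identity), is all of M_n(k). -/

import Mathlib

/-!
Burnside's theorem: if a subalgebra `S` of `End k V` acts irreducibly, then `V` is a simple
`S`-module, Schur's lemma over the algebraically closed field `k` gives `End_S V = k`, and the
Jacobson density theorem then makes every `k`-linear endomorphism of `V` an element of `S`.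

For the length bound, the spans `T m` of products of at most `m` generators increase with `m` and
satisfy `T (m + 1) = T 1 * T m`. Hence once `T (m + 1) = T m` the chain is constant, and this must
happen within `dim M_n(k) = n²` steps. A stable `T m` is closed under multiplication, so it is the
algebra generated by `A` and `B`.
-/

open Module Submodule
open scoped Pointwise

section Irreducible
variable {k V : Type*} [Field k] [AddCommGroup V] [Module k V]

def ActsIrreducibly (s : Set (End k V)) : Prop :=
  ∀ W : Submodule k V, (∀ f ∈ s, ∀ x ∈ W, f x ∈ W) → W = ⊥ ∨ W = ⊤

def Submodule.stabilizerSubalgebra (W : Submodule k V) : Subalgebra k (End k V) where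
  carrier := {f | ∀ x ∈ W, f x ∈ W}
  mul_mem' hf hg x hx := hf _ (hg x hx)
  add_mem' hf hg x hx := W.add_mem (hf x hx) (hg x hx)
  algebraMap_mem' c _ hx := W.smul_mem c hx

theorem actsIrreducibly_adjoin_iff {s : Set (End k V)} :
    ActsIrreducibly (Algebra.adjoin k s : Set (End k V)) ↔ ActsIrreducibly s := by
  refine forall_congr' fun W => imp_congr_left ⟨fun h f hf => h f (Algebra.subset_adjoin hf),
    fun h f hf => ?_⟩
  exact Algebra.adjoin_le (S := W.stabilizerSubalgebra) h hf

theorem actsIrreducibly_univ : ActsIrreducibly (Set.univ : Set (End k V)) := fun W hW => by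
  let W' : Submodule (End k V) V := { W with smul_mem' := fun f x hx => hW f trivial x hx }
  rcases subsingleton_or_nontrivial V with hV | hV
  · exact Or.inl (Subsingleton.elim _ _)
  rcases eq_bot_or_eq_top W' with h | h
  · exact Or.inl (by simpa [W', Submodule.ext_iff] using h)
  · exact Or.inr (by simpa [W', Submodule.ext_iff] using h)

theorem Subalgebra.eq_top_of_actsIrreducibly [IsAlgClosed k] [FiniteDimensional k V]
    {S : Subalgebra k (End k V)} (hS : ActsIrreducibly (S : Set (End k V))) : S = ⊤ := by
  rw [eq_top_iff]
  intro f _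
  rcases subsingleton_or_nontrivial V with hV | hV
  · rw [Subsingleton.elim f 1]
    exact S.one_mem
  have : IsSimpleModule S V := by
    refine { eq_bot_or_eq_top := fun N => ?_ }
    rcases hS (N.restrictScalars k) fun g hg x hx => N.smul_mem ⟨g, hg⟩ hx with h | h
    · exact Or.inl (by simpa using h)
    · exact Or.inr (by simpa using h)
  have hschur := IsSimpleModule.algebraMap_end_bijective_of_isAlgClosed k (A := S) (V := V)
  have : Module.Finite (End S V) V := Module.Finite.of_restrictScalars_finite k _ _
  let F : End (End S V) V :=
    { toFun := f
      map_add' := f.map_add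
      map_smul' := fun φ x => by
        obtain ⟨c, rfl⟩ := hschur.2 φ
        exact f.map_smul c x }
  obtain ⟨a, ha⟩ := Module.Finite.toModuleEnd_moduleEnd_surjective (R := S) (M := V) F
  have : (a : End k V) = f := LinearMap.ext fun x => congr($ha x)
  exact this ▸ a.2

theorem Algebra.adjoin_eq_top_iff_actsIrreducibly [IsAlgClosed k] [FiniteDimensional k V]
    {s : Set (End k V)} : Algebra.adjoin k s = ⊤ ↔ ActsIrreducibly s := by
  rw [← actsIrreducibly_adjoin_iff]
  refine ⟨fun h => ?_, Subalgebra.eq_top_of_actsIrreducibly⟩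
  rw [h, Algebra.coe_top]
  exact actsIrreducibly_univ

end Irreducible

open Matrix in
theorem Matrix.adjoin_eq_top_iff {k ι : Type*} [Field k] [IsAlgClosed k] [Fintype ι]
    [DecidableEq ι] {s : Set (Matrix ι ι k)} :
    Algebra.adjoin k s = ⊤ ↔
      ∀ W : Submodule k (ι → k), (∀ M ∈ s, ∀ x ∈ W, M *ᵥ x ∈ W) →
        W = ⊥ ∨ W = ⊤ := by
  let e : Matrix ι ι k →ₐ[k] End k (ι → k) := Matrix.toLinAlgEquiv'.toAlgHom
  have he : Function.Injective e := Matrix.toLinAlgEquiv'.injective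
  have htop : (⊤ : Subalgebra k (Matrix ι ι k)).map e = ⊤ := by
    rw [Algebra.map_top, AlgHom.range_eq_top]
    exact Matrix.toLinAlgEquiv'.surjective
  rw [← (Subalgebra.map_injective he).eq_iff, htop, AlgHom.map_adjoin,
    Algebra.adjoin_eq_top_iff_actsIrreducibly]
  simp [ActsIrreducibly, e]

theorem Submodule.exists_le_finrank_succ_eq_of_monotone {K V : Type*} [DivisionRing K]
    [AddCommGroup V] [Module K V] [FiniteDimensional K V] {f : ℕ → Submodule K V}
    (hf : Monotone f) :
    ∃ m ≤ finrank K V, f (m + 1) = f m := by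
  by_contra! h
  have hlen : ∀ m ≤ finrank K V + 1, m ≤ finrank K (f m) := by
    intro m
    induction m with
    | zero => simp
    | succ m ih =>
      intro hm
      have := Submodule.finrank_lt_finrank_of_lt
        ((hf (Nat.le_add_right m 1)).lt_of_ne' (h m (by omega)))
      have := ih (by omega)
      omega
  have := (hlen _ le_rfl).trans (Submodule.finrank_le _)
  omega

section Words
variable (k : Type*) {R : Type*} [CommSemiring k] [Semiring R] [Algebra k R] (s : Set R)

def words (m : ℕ) : Set R :=
  {x | ∃ l : List R, l.length ≤ m ∧ (∀ y ∈ l, y ∈ s) ∧ x = l.prod}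

def wordSpan (m : ℕ) : Submodule k R :=
  span k (words s m)

variable {k s}

theorem words_mono : Monotone (words s) := by
  rintro a b hab x ⟨l, hl, hs, rfl⟩
  exact ⟨l, hl.trans hab, hs, rfl⟩

theorem one_mem_words (m : ℕ) : (1 : R) ∈ words s m :=
  ⟨[], by simp⟩

theorem mem_words_one {x : R} (hx : x ∈ s) : x ∈ words s 1 :=
  ⟨[x], by simp, by simpa using hx, by simp⟩

theorem words_mul_subset (a b : ℕ) : words s a * words s b ⊆ words s (a + b) := by
  rintro _ ⟨_, ⟨l, hl, hs, rfl⟩, _, ⟨l', hl', hs', rfl⟩, rfl⟩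
  refine ⟨l ++ l', by simp; omega, fun y hy => ?_, List.prod_append.symm⟩
  rcases List.mem_append.mp hy with hy | hy
  exacts [hs y hy, hs' y hy]

theorem words_succ_subset (m : ℕ) : words s (m + 1) ⊆ words s 1 * words s m := by
  rintro _ ⟨l, hl, hs, rfl⟩
  cases l with
  | nil => exact ⟨1, one_mem_words 1, 1, one_mem_words m, by simp⟩
  | cons a t =>
    refine ⟨a, mem_words_one (hs a List.mem_cons_self), t.prod,
      ⟨t, by simpa using hl, fun y hy => hs y (List.mem_cons_of_mem a hy), rfl⟩, ?_⟩
    simp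

theorem words_subset_adjoin (m : ℕ) : words s m ⊆ Algebra.adjoin k s := by
  rintro _ ⟨l, -, hs, rfl⟩
  exact list_prod_mem fun y hy => Algebra.subset_adjoin (hs y hy)

theorem wordSpan_mono : Monotone (wordSpan k s) :=
  fun _ _ hab => span_mono (words_mono hab)

theorem wordSpan_mul_le (a b : ℕ) : wordSpan k s a * wordSpan k s b ≤ wordSpan k s (a + b) := by
  rw [wordSpan, wordSpan, span_mul_span]
  exact span_mono (words_mul_subset a b)

theorem wordSpan_succ (m : ℕ) : wordSpan k s (m + 1) = wordSpan k s 1 * wordSpan k s m := by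
  refine le_antisymm ?_ (by simpa [add_comm] using wordSpan_mul_le 1 m)
  rw [wordSpan, wordSpan, wordSpan, span_mul_span]
  exact span_mono (words_succ_subset m)

theorem wordSpan_add_eq_of_succ_eq {m : ℕ} (h : wordSpan k s (m + 1) = wordSpan k s m) :
    ∀ p, wordSpan k s (m + p) = wordSpan k s m
  | 0 => rfl
  | p + 1 => by
    rw [← add_assoc, wordSpan_succ, wordSpan_add_eq_of_succ_eq h p, ← wordSpan_succ, h]

theorem toSubmodule_adjoin_eq_wordSpan_of_succ_eq {m : ℕ}
    (h : wordSpan k s (m + 1) = wordSpan k s m) :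
    Subalgebra.toSubmodule (Algebra.adjoin k s) = wordSpan k s m := by
  refine le_antisymm ?_ (span_le.mpr (words_subset_adjoin m))
  let T : Subalgebra k R := (wordSpan k s m).toSubalgebra (subset_span (one_mem_words m))
    fun x y hx hy => by
      rw [← wordSpan_add_eq_of_succ_eq h m]
      exact wordSpan_mul_le m m (mul_mem_mul hx hy)
  have hsT : s ⊆ T := fun x hx => show x ∈ wordSpan k s m from
    h ▸ wordSpan_mono (Nat.le_add_left 1 m) (subset_span (mem_words_one hx))
  exact Algebra.adjoin_le hsT

end Words

theorem toSubmodule_adjoin_eq_wordSpan {k R : Type*} [Field k] [Ring R] [Algebra k R]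
    [FiniteDimensional k R] (s : Set R) {d : ℕ} (hd : finrank k R ≤ d) :
    Subalgebra.toSubmodule (Algebra.adjoin k s) = wordSpan k s d := by
  obtain ⟨m, hm, h⟩ := Submodule.exists_le_finrank_succ_eq_of_monotone
    (wordSpan_mono (k := k) (s := s))
  rw [toSubmodule_adjoin_eq_wordSpan_of_succ_eq h, ← Nat.add_sub_cancel' (hm.trans hd),
    wordSpan_add_eq_of_succ_eq h]

theorem stmt_3_general {k : Type*} [Field k] [IsAlgClosed k] {n : ℕ}
    (A B : GL (Fin n) k) :
    (∀ W : Submodule k (Fin n → k),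
        (∀ x ∈ W, Matrix.mulVec (A : Matrix (Fin n) (Fin n) k) x ∈ W) →
        (∀ x ∈ W, Matrix.mulVec (B : Matrix (Fin n) (Fin n) k) x ∈ W) →
        W = ⊥ ∨ W = ⊤) ↔
      Submodule.span k {M : Matrix (Fin n) (Fin n) k |
        ∃ l : List (Matrix (Fin n) (Fin n) k),
          l.length ≤ n ^ 2 ∧
          (∀ x ∈ l, x = (A : Matrix (Fin n) (Fin n) k) ∨
            x = (B : Matrix (Fin n) (Fin n) k)) ∧
          M = l.prod} = ⊤ := by
  have hdim : finrank k (Matrix (Fin n) (Fin n) k) ≤ n ^ 2 := by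
    simp [Module.finrank_matrix, sq]
  change _ ↔
    wordSpan k {(A : Matrix (Fin n) (Fin n) k), (B : Matrix (Fin n) (Fin n) k)} (n ^ 2) = ⊤
  rw [← toSubmodule_adjoin_eq_wordSpan _ hdim, Algebra.toSubmodule_eq_top,
    Matrix.adjoin_eq_top_iff]
  simp only [Set.forall_mem_insert, Set.mem_singleton_iff, forall_eq, and_imp]

/-- Let `k` be an algebraically closed field, `n ≥ 1`, and `A, B ∈ GL_n(k)`.
Then `⟨A, B⟩` acts irreducibly on `kⁿ` if and only if the `k`-linear span of all
products of at most `n²` matrices each equal to `A` or `B` (the empty product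
being the identity) is all of `M_n(k)`. -/
theorem stmt_3 {k : Type*} [Field k] [IsAlgClosed k] {n : ℕ} (hn : 1 ≤ n)
    (A B : GL (Fin n) k) :
    (∀ W : Submodule k (Fin n → k),
        (∀ x ∈ W, Matrix.mulVec (A : Matrix (Fin n) (Fin n) k) x ∈ W) →
        (∀ x ∈ W, Matrix.mulVec (B : Matrix (Fin n) (Fin n) k) x ∈ W) →
        W = ⊥ ∨ W = ⊤) ↔
      Submodule.span k {M : Matrix (Fin n) (Fin n) k |
        ∃ l : List (Matrix (Fin n) (Fin n) k),
          l.length ≤ n ^ 2 ∧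
          (∀ x ∈ l, x = (A : Matrix (Fin n) (Fin n) k) ∨
            x = (B : Matrix (Fin n) (Fin n) k)) ∧
          M = l.prod} = ⊤ :=
  stmt_3_general A B
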